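/- arXiv:1803.09828 — 4 statements merged into one kernel-verified Lean document; each statement's English description precedes it below -/
import Mathlib

section
/- Arm Lemma (endpoint direction). Let u_0, u_1, ..., u_m and v_0, v_1, ..., v_m be points of ℝ² (identified with ℂ) such that: (i) u_0 = v_0; (ii) |u_j − u_{j−1}| = |v_j − v_{j−1}| for j = 1, ..., m; (iii) for each j = 1, ..., m the differences u_j − u_{j−1} and v_j − v_{j−1} are nonzero and their arguments lie in the open interval (−π/10, π/10); (iv) arg(v_j − v_{j−1}) ≥ arg(u_j − u_{j−1}) for each j = 1, ..., m. Then either v_m = u_m, or v_m − u_m is nonzero with arg(v_m − u_m) ∈ (π/2 − π/10, π/2 + π/10). -/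
open Complex Real Set

/-!
Two vectors `z = r e^{iα}` and `w = r e^{iβ}` of equal length with `α ≤ β` differ by the chord
`w - z = 2r sin((β - α)/2) · i e^{i(α + β)/2}`, which points in the direction `π/2 + (α + β)/2`.
When `|α|, |β| < θ < π/2` this direction lies in the open sector of half-angle `θ` around the
positive imaginary axis. That sector, with `0` added, is closed under addition, and
`v m - u m` telescopes into the sum of the chords of the individual steps.
-/

theorem Real.abs_sin_lt_tan_mul_cos_iff {μ θ : ℝ} (hμ : |μ| < π / 2)
    (hθ₀ : -(π / 2) < θ) (hθ : θ < π / 2) :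
    |Real.sin μ| < Real.tan θ * Real.cos μ ↔ |μ| < θ := by
  obtain ⟨hμ₁, hμ₂⟩ := abs_lt.mp hμ
  have hcos : 0 < Real.cos μ := cos_pos_of_mem_Ioo ⟨hμ₁, hμ₂⟩
  have habs : |Real.sin μ| / Real.cos μ = Real.tan |μ| := by
    rcases le_or_gt 0 μ with h | h
    · rw [abs_of_nonneg h, abs_of_nonneg (sin_nonneg_of_nonneg_of_le_pi h (by linarith)),
        Real.tan_eq_sin_div_cos]
    · rw [abs_of_neg h, abs_of_neg (sin_neg_of_neg_of_neg_pi_lt h (by linarith)),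
        Real.tan_neg, Real.tan_eq_sin_div_cos, neg_div]
  rw [← div_lt_iff₀ hcos, habs]
  exact strictMonoOn_tan.lt_iff_lt ⟨by linarith [abs_nonneg μ], hμ⟩ ⟨hθ₀, hθ⟩

theorem Complex.exp_mul_I_sub_exp_mul_I (α β : ℝ) :
    exp (β * I) - exp (α * I) =
      (2 * Real.sin ((β - α) / 2) : ℝ) * I * exp (((α + β) / 2 : ℝ) * I) := by
  apply Complex.ext <;>
    simp only [sub_re, sub_im, mul_re, mul_im, exp_ofReal_mul_I_re, exp_ofReal_mul_I_im,
      ofReal_re, ofReal_im, I_re, I_im]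
  · rw [Real.cos_sub_cos]; ring_nf
  · rw [Real.sin_sub_sin]; ring_nf

/-- The open sector `{c | arg c ∈ (π/2 - θ, π/2 + θ)}` together with `0` (for `0 ≤ θ < π/2`),
cut out by linear inequalities so that it is visibly closed under addition. -/
def upperSector (θ : ℝ) : AddSubmonoid ℂ where
  carrier := {c | c = 0 ∨ |c.re| < Real.tan θ * c.im}
  zero_mem' := Or.inl rfl
  add_mem' := by
    rintro a b (rfl | ha) (rfl | hb)
    · simp
    · simpa using Or.inr hb
    · simpa using Or.inr ha
    right
    simp only [add_re, add_im]
    calc |a.re + b.re| ≤ |a.re| + |b.re| := abs_add_le _ _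
      _ < Real.tan θ * a.im + Real.tan θ * b.im := add_lt_add ha hb
      _ = Real.tan θ * (a.im + b.im) := by ring

theorem mem_upperSector {θ : ℝ} {c : ℂ} :
    c ∈ upperSector θ ↔ c = 0 ∨ |c.re| < Real.tan θ * c.im := Iff.rfl

theorem mul_I_mul_exp_mem_upperSector_iff {s μ θ : ℝ} (hs : 0 < s) (hμ : |μ| < π / 2)
    (hθ₀ : -(π / 2) < θ) (hθ : θ < π / 2) :
    (s : ℂ) * I * exp (μ * I) ∈ upperSector θ ↔ |μ| < θ := by
  have hne : (s : ℂ) * I * exp (μ * I) ≠ 0 := by simp [hs.ne']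
  have hre : ((s : ℂ) * I * exp (μ * I)).re = -(s * Real.sin μ) := by
    simp [exp_ofReal_mul_I_re, exp_ofReal_mul_I_im]
  have him : ((s : ℂ) * I * exp (μ * I)).im = s * Real.cos μ := by
    simp [exp_ofReal_mul_I_re, exp_ofReal_mul_I_im]
  rw [mem_upperSector, or_iff_right hne, hre, him, abs_neg, abs_mul, abs_of_pos hs,
    mul_left_comm, mul_lt_mul_iff_right₀ hs, abs_sin_lt_tan_mul_cos_iff hμ hθ₀ hθ]

theorem sub_mem_upperSector {θ : ℝ} (hθ : θ < π / 2) {z w : ℂ} (hnorm : ‖z‖ = ‖w‖)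
    (hz : z.arg ∈ Ioo (-θ) θ) (hw : w.arg ∈ Ioo (-θ) θ) (hle : z.arg ≤ w.arg) :
    w - z ∈ upperSector θ := by
  set s := ‖z‖ * (2 * Real.sin ((w.arg - z.arg) / 2)) with hs_def
  have hchord : w - z = (s : ℂ) * I * exp (((z.arg + w.arg) / 2 : ℝ) * I) := by
    conv_lhs => rw [← norm_mul_exp_arg_mul_I w, ← norm_mul_exp_arg_mul_I z, ← hnorm, ← mul_sub,
      exp_mul_I_sub_exp_mul_I]
    rw [hs_def]
    push_cast
    ring
  have hs : 0 ≤ s := mul_nonneg (norm_nonneg z) <| mul_nonneg zero_le_two <|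
    sin_nonneg_of_nonneg_of_le_pi (by linarith) (by linarith [hz.1, hw.2])
  rcases hs.eq_or_lt with hs | hs
  · simp [hchord, ← hs, zero_mem]
  · rw [hchord, mul_I_mul_exp_mem_upperSector_iff hs _ (by linarith [hz.1, hz.2]) hθ] <;>
      refine abs_lt.mpr ⟨?_, ?_⟩ <;> linarith [hz.1, hz.2, hw.1, hw.2]

theorem arg_mem_Ioo_of_mem_upperSector {θ : ℝ} (hθ₀ : 0 ≤ θ) (hθ : θ < π / 2) {c : ℂ}
    (hc : c ∈ upperSector θ) (hc₀ : c ≠ 0) : c.arg ∈ Ioo (π / 2 - θ) (π / 2 + θ) := by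
  have hcone : |c.re| < Real.tan θ * c.im := (mem_upperSector.mp hc).resolve_left hc₀
  have him : 0 < c.im := by
    by_contra! h
    have := mul_nonpos_of_nonneg_of_nonpos (tan_nonneg_of_nonneg_of_le_pi_div_two hθ₀ hθ.le) h
    linarith [abs_nonneg c.re]
  have harg₀ : 0 < c.arg := (arg_nonneg_iff.mpr him.le).lt_of_ne
    fun h ↦ him.ne' (arg_eq_zero_iff.mp h.symm).2
  have harg_pi : c.arg < π := arg_lt_pi_iff.mpr (Or.inr him.ne')
  have hpolar : c = (‖c‖ : ℂ) * I * exp ((c.arg - π / 2 : ℝ) * I) := by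
    calc c = ‖c‖ * exp (c.arg * I) := (norm_mul_exp_arg_mul_I c).symm
      _ = ‖c‖ * (exp (π / 2 * I) * exp ((c.arg - π / 2 : ℝ) * I)) := by
        rw [← Complex.exp_add]; push_cast; ring_nf
      _ = (‖c‖ : ℂ) * I * exp ((c.arg - π / 2 : ℝ) * I) := by
        rw [exp_pi_div_two_mul_I, mul_assoc]
  rw [hpolar, mul_I_mul_exp_mem_upperSector_iff (norm_pos_iff.mpr hc₀)
    (abs_lt.mpr ⟨by linarith, by linarith⟩) (by linarith) hθ] at hc
  exact ⟨by linarith [(abs_lt.mp hc).1], by linarith [(abs_lt.mp hc).2]⟩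

theorem arm_lemma_endpoint_direction_general (m : ℕ) (u v : ℕ → ℂ)
    (h0 : u 0 = v 0)
    (hlen : ∀ j, 1 ≤ j → j ≤ m → ‖u j - u (j - 1)‖ = ‖v j - v (j - 1)‖)
    (huarg : ∀ j, 1 ≤ j → j ≤ m →
      Complex.arg (u j - u (j - 1)) ∈ Set.Ioo (-(π / 10)) (π / 10))
    (hvarg : ∀ j, 1 ≤ j → j ≤ m →
      Complex.arg (v j - v (j - 1)) ∈ Set.Ioo (-(π / 10)) (π / 10))
    (hmono : ∀ j, 1 ≤ j → j ≤ m →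
      Complex.arg (u j - u (j - 1)) ≤ Complex.arg (v j - v (j - 1))) :
    v m = u m ∨ (v m - u m ≠ 0 ∧
      Complex.arg (v m - u m) ∈ Set.Ioo (π / 2 - π / 10) (π / 2 + π / 10)) := by
  have hθ : π / 10 < π / 2 := by linarith [pi_pos]
  have hstep : ∀ j < m, (v (j + 1) - v j) - (u (j + 1) - u j) ∈ upperSector (π / 10) := by
    intro j hj
    have h₁ : 1 ≤ j + 1 := j.succ_pos
    simpa using sub_mem_upperSector hθ (hlen _ h₁ hj) (huarg _ h₁ hj) (hvarg _ h₁ hj)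
      (hmono _ h₁ hj)
  have hsum : v m - u m = ∑ j ∈ Finset.range m, ((v (j + 1) - v j) - (u (j + 1) - u j)) := by
    rw [Finset.sum_sub_distrib, Finset.sum_range_sub, Finset.sum_range_sub, h0]
    ring
  have hmem : v m - u m ∈ upperSector (π / 10) :=
    hsum ▸ sum_mem fun j hj ↦ hstep j (Finset.mem_range.mp hj)
  rcases eq_or_ne (v m - u m) 0 with h | h
  · exact Or.inl (sub_eq_zero.mp h)
  · exact Or.inr ⟨h, arg_mem_Ioo_of_mem_upperSector (by positivity) hθ hmem h⟩

/-- **Arm Lemma (endpoint direction).** -/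
theorem arm_lemma_endpoint_direction (m : ℕ) (u v : ℕ → ℂ)
    (h0 : u 0 = v 0)
    (hlen : ∀ j, 1 ≤ j → j ≤ m → ‖u j - u (j - 1)‖ = ‖v j - v (j - 1)‖)
    (hune : ∀ j, 1 ≤ j → j ≤ m → u j - u (j - 1) ≠ 0)
    (hvne : ∀ j, 1 ≤ j → j ≤ m → v j - v (j - 1) ≠ 0)
    (huarg : ∀ j, 1 ≤ j → j ≤ m →
      Complex.arg (u j - u (j - 1)) ∈ Set.Ioo (-(π / 10)) (π / 10))
    (hvarg : ∀ j, 1 ≤ j → j ≤ m →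
      Complex.arg (v j - v (j - 1)) ∈ Set.Ioo (-(π / 10)) (π / 10))
    (hmono : ∀ j, 1 ≤ j → j ≤ m →
      Complex.arg (u j - u (j - 1)) ≤ Complex.arg (v j - v (j - 1))) :
    v m = u m ∨ (v m - u m ≠ 0 ∧
      Complex.arg (v m - u m) ∈ Set.Ioo (π / 2 - π / 10) (π / 2 + π / 10)) :=
  arm_lemma_endpoint_direction_general m u v h0 hlen huarg hvarg hmono
end

section
/- Arm Lemma (disjointness under strict first turn). Let u_0, u_1, ..., u_m and v_0, v_1, ..., v_m be points of ℝ² (identified with ℂ) such that: (i) u_0 = v_0; (ii) |u_j − u_{j−1}| = |v_j − v_{j−1}| for j = 1, ..., m; (iii) for each j = 1, ..., m the differences u_j − u_{j−1} and v_j − v_{j−1} are nonzero and their arguments lie in the open interval (−π/10, π/10); (iv) arg(v_j − v_{j−1}) ≥ arg(u_j − u_{j−1}) for each j = 1, ..., m, with strict inequality arg(v_1 − v_0) > arg(u_1 − u_0) for j = 1. Then the broken line through u_0, ..., u_m and the broken line through v_0, ..., v_m intersect exactly in the single point u_0 = v_0. -/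
/-!
Let `K` be the closed sector `|Im z| ≤ t Re z` with `t = tan (π / 10) < 1`. All edges of the
`u`-arm lie in `K`, so any two points of the `u`-arm differ by a vector of `K ∪ -K`. Since
corresponding edges have equal length and `arg` increases from `u` to `v`, every
`(v k - v (k - 1)) - (u k - u (k - 1))` lies in the rotated sector `I • K`, hence so does the gap
`v n - u n`, and the strict first turn makes `Im (v n - u n) > 0` for `n ≥ 1`.
A common point `p = (1 - b) v (j - 1) + b v j` differs from the point
`(1 - b) u (j - 1) + b u j` of the `u`-arm by a vector of `I • K ∩ (K ∪ -K) = {0}` (as `t < 1`),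
and positivity of the gaps then forces `j = 1` and `b = 0`, i.e. `p = v 0`.
-/

open Complex Real Set

section BrokenLine

variable {𝕜 E : Type*} [Field 𝕜] [LinearOrder 𝕜] [IsStrictOrderedRing 𝕜] [AddCommGroup E]
  [Module 𝕜 E]

variable (𝕜) in
def brokenLine (w : ℕ → E) (m : ℕ) : Set E :=
  ⋃ i ∈ Finset.Icc 1 m, segment 𝕜 (w (i - 1)) (w i)

namespace PointedCone

variable {K : PointedCone 𝕜 E} {w : ℕ → E} {x y p q : E}

theorem sub_mem_of_increments_mem {i j : ℕ} (hw : ∀ k, i < k → k ≤ j → w k - w (k - 1) ∈ K)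
    (hij : i ≤ j) : w j - w i ∈ K := by
  induction j, hij using Nat.le_induction with
  | base => simp
  | succ n hin ih =>
    have hstep := K.add_mem (hw (n + 1) (by omega) le_rfl)
      (ih fun k hik hkn => hw k hik (by omega))
    simpa using hstep

theorem sub_left_mem_of_mem_segment (hxy : y - x ∈ K) (hp : p ∈ segment 𝕜 x y) : p - x ∈ K := by
  rw [segment_eq_image'] at hp
  obtain ⟨a, ⟨ha, -⟩, rfl⟩ := hp
  simpa using K.smul_mem ha hxy

theorem sub_right_mem_of_mem_segment (hxy : y - x ∈ K) (hp : p ∈ segment 𝕜 x y) :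
    y - p ∈ K := by
  rw [segment_eq_image'] at hp
  obtain ⟨a, ⟨-, ha⟩, rfl⟩ := hp
  convert K.smul_mem (sub_nonneg.2 ha) hxy using 1
  module

theorem sub_mem_or_of_mem_segment (hxy : y - x ∈ K) (hp : p ∈ segment 𝕜 x y)
    (hq : q ∈ segment 𝕜 x y) : q - p ∈ K ∨ p - q ∈ K := by
  rw [segment_eq_image'] at hp hq
  obtain ⟨a, -, rfl⟩ := hp
  obtain ⟨b, -, rfl⟩ := hq
  rcases le_total a b with hab | hba
  · left
    convert K.smul_mem (sub_nonneg.2 hab) hxy using 1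
    module
  · right
    convert K.smul_mem (sub_nonneg.2 hba) hxy using 1
    module

theorem sub_mem_or_of_mem_brokenLine {m : ℕ}
    (hw : ∀ k, 1 ≤ k → k ≤ m → w k - w (k - 1) ∈ K)
    (hp : p ∈ brokenLine 𝕜 w m) (hq : q ∈ brokenLine 𝕜 w m) : q - p ∈ K ∨ p - q ∈ K := by
  have later : ∀ {i j p q}, i < j → 1 ≤ i → j ≤ m → p ∈ segment 𝕜 (w (i - 1)) (w i) →
      q ∈ segment 𝕜 (w (j - 1)) (w j) → q - p ∈ K := by
    intro i j p q hij hi hj hp hq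
    have hq' := sub_left_mem_of_mem_segment (hw j (by omega) hj) hq
    have hp' := sub_right_mem_of_mem_segment (hw i hi (by omega)) hp
    have hmid := sub_mem_of_increments_mem (fun k hik hkj => hw k (by omega) (by omega))
      (show i ≤ j - 1 by omega)
    convert K.add_mem (K.add_mem hq' hmid) hp' using 1
    abel
  simp only [brokenLine, mem_iUnion, Finset.mem_Icc, exists_prop] at hp hq
  obtain ⟨i, ⟨hi1, him⟩, hp⟩ := hp
  obtain ⟨j, ⟨hj1, hjm⟩, hq⟩ := hq
  rcases lt_trichotomy i j with hij | rfl | hji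
  · exact .inl (later hij hi1 hjm hp hq)
  · exact sub_mem_or_of_mem_segment (hw i hi1 him) hp hq
  · exact .inr (later hji hj1 him hq hp)

end PointedCone

end BrokenLine

section Sector

/-- For `t = tan θ` with `0 < θ < π / 2` this is `{0} ∪ {z | |arg z| ≤ θ}`. -/
def sector (t : ℝ) : PointedCone ℝ ℂ where
  carrier := {z | |z.im| ≤ t * z.re}
  add_mem' {z w} hz hw := by
    simp only [mem_ofPred_eq, add_im, add_re] at *
    linarith [abs_add_le z.im w.im]
  zero_mem' := by simp
  smul_mem' := by
    rintro ⟨c, hc⟩ z hz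
    simp only [mem_ofPred_eq, Nonneg.mk_smul, smul_re, smul_im, smul_eq_mul, abs_mul,
      abs_of_nonneg hc] at *
    nlinarith

variable {t θ : ℝ} {z : ℂ}

theorem mem_sector_iff : z ∈ sector t ↔ |z.im| ≤ t * z.re := Iff.rfl

theorem re_nonneg_of_mem_sector (ht : 0 < t) (hz : z ∈ sector t) : 0 ≤ z.re :=
  nonneg_of_mul_nonneg_right ((abs_nonneg _).trans hz) ht

theorem re_pos_of_mem_sector (ht : 0 < t) (hz : z ∈ sector t) (hz0 : z ≠ 0) : 0 < z.re := by
  refine (re_nonneg_of_mem_sector ht hz).lt_of_ne fun hre => hz0 (Complex.ext hre.symm ?_)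
  have := mem_sector_iff.1 hz
  rw [← hre, mul_zero] at this
  exact abs_nonpos_iff.1 this

theorem eq_zero_of_mem_sector_of_neg_I_mul_mem_sector (ht0 : 0 ≤ t) (ht1 : t < 1)
    (hz : z ∈ sector t ∨ -z ∈ sector t) (hIz : -I * z ∈ sector t) : z = 0 := by
  have hre : |z.re| ≤ t * z.im := by simpa [mem_sector_iff] using hIz
  have him : |z.im| ≤ t * |z.re| := by
    rcases hz with hz | hz <;> rw [mem_sector_iff] at hz
    · exact hz.trans (mul_le_mul_of_nonneg_left (le_abs_self _) ht0)
    · simp only [neg_im, neg_re, abs_neg] at hz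
      exact hz.trans (by nlinarith [neg_abs_le z.re])
  have him0 : z.im = 0 := by
    have h : |z.im| ≤ t ^ 2 * |z.im| :=
      calc |z.im| ≤ t * |z.re| := him
        _ ≤ t * (t * |z.im|) :=
          mul_le_mul_of_nonneg_left (hre.trans (mul_le_mul_of_nonneg_left (le_abs_self _) ht0)) ht0
        _ = t ^ 2 * |z.im| := by ring
    have ht2 : t ^ 2 < 1 := by nlinarith
    exact abs_nonpos_iff.1 (by nlinarith [abs_nonneg z.im])
  have hre0 : z.re = 0 := by
    rw [him0, mul_zero] at hre
    exact abs_nonpos_iff.1 hre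
  exact Complex.ext hre0 him0

theorem abs_sin_le_tan_mul_cos {φ : ℝ} (hφ : |φ| ≤ θ) (hθ : θ < π / 2) :
    |Real.sin φ| ≤ Real.tan θ * Real.cos φ := by
  have hcos : 0 < Real.cos θ :=
    Real.cos_pos_of_mem_Ioo ⟨by linarith [abs_nonneg φ, pi_pos], hθ⟩
  have hsin : 0 ≤ Real.sin (θ - |φ|) :=
    Real.sin_nonneg_of_nonneg_of_le_pi (by linarith) (by linarith [abs_nonneg φ, pi_pos])
  rw [Real.sin_sub, Real.cos_abs] at hsin
  rw [Real.abs_sin_eq_sin_abs_of_abs_le_pi (by linarith [pi_pos]), Real.tan_eq_sin_div_cos,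
    div_mul_eq_mul_div, le_div_iff₀ hcos]
  linarith

theorem exp_mul_I_mem_sector {φ : ℝ} (hφ : |φ| ≤ θ) (hθ : θ < π / 2) :
    exp (φ * I) ∈ sector (Real.tan θ) := by
  rw [mem_sector_iff, exp_ofReal_mul_I_re, exp_ofReal_mul_I_im]
  exact abs_sin_le_tan_mul_cos hφ hθ

theorem mem_sector_of_abs_arg_le (hz : |arg z| ≤ θ) (hθ : θ < π / 2) :
    z ∈ sector (Real.tan θ) := by
  rw [← norm_mul_exp_arg_mul_I z, ← real_smul]
  exact (sector _).smul_mem (norm_nonneg z) (exp_mul_I_mem_sector hz hθ)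

theorem neg_I_mul_exp_mul_I_sub_exp_mul_I (α β : ℝ) :
    -I * (exp (β * I) - exp (α * I)) =
      (2 * Real.sin ((β - α) / 2)) • exp (((β + α) / 2 : ℝ) * I) := by
  apply Complex.ext <;>
    simp only [mul_re, mul_im, neg_re, neg_im, I_re, I_im, sub_re, sub_im, smul_re, smul_im,
      smul_eq_mul, exp_ofReal_mul_I_re, exp_ofReal_mul_I_im]
  · rw [Real.sin_sub_sin]; ring
  · rw [Real.cos_sub_cos]; ring

theorem neg_I_mul_sub_mem_sector {U V : ℂ} (hnorm : ‖U‖ = ‖V‖) (hU : |arg U| ≤ θ)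
    (hV : |arg V| ≤ θ) (hUV : arg U ≤ arg V) (hθ : θ < π / 2) :
    -I * (V - U) ∈ sector (Real.tan θ) := by
  have hsin : 0 ≤ Real.sin ((arg V - arg U) / 2) :=
    Real.sin_nonneg_of_nonneg_of_le_pi (by linarith) (by linarith [abs_le.1 hU, abs_le.1 hV])
  have hmid : |(arg V + arg U) / 2| ≤ θ := by
    rw [abs_le] at *; constructor <;> linarith
  rw [← norm_mul_exp_arg_mul_I U, ← norm_mul_exp_arg_mul_I V, ← hnorm, ← mul_sub,
    mul_left_comm, neg_I_mul_exp_mul_I_sub_exp_mul_I, ← real_smul]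
  exact (sector _).smul_mem (norm_nonneg U)
    ((sector _).smul_mem (by positivity) (exp_mul_I_mem_sector hmid hθ))

theorem re_pos_of_increments_mem_sector {w : ℕ → ℂ} {m n : ℕ} (ht : 0 < t)
    (hw : ∀ k, 1 ≤ k → k ≤ m → w k - w (k - 1) ∈ sector t) (hw0 : w 0 = 0) (hw1 : w 1 ≠ 0)
    (hn : 1 ≤ n) (hnm : n ≤ m) : 0 < (w n).re := by
  have h1 : 0 < (w 1).re :=
    re_pos_of_mem_sector ht (by simpa [hw0] using hw 1 le_rfl (hn.trans hnm)) hw1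
  have h1n := re_nonneg_of_mem_sector ht
    (PointedCone.sub_mem_of_increments_mem (fun k hk hkn => hw k (by omega) (by omega)) hn)
  rw [sub_re] at h1n
  linarith

theorem eq_of_mem_brokenLine_inter (ht0 : 0 < t) (ht1 : t < 1) {m : ℕ} {u v : ℕ → ℂ}
    {p : ℂ} (hu : ∀ k, 1 ≤ k → k ≤ m → u k - u (k - 1) ∈ sector t)
    (hgap : ∀ n ≤ m, -I * (v n - u n) ∈ sector t)
    (hgap_pos : ∀ n, 1 ≤ n → n ≤ m → 0 < (v n - u n).im)
    (hpu : p ∈ brokenLine ℝ u m) (hpv : p ∈ brokenLine ℝ v m) : p = v 0 := by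
  obtain ⟨j, hj, hpj⟩ := mem_iUnion₂.1 hpv
  rw [segment_eq_image] at hpj
  obtain ⟨b, ⟨hb0, hb1⟩, rfl⟩ := hpj
  set q : ℂ := (1 - b) • u (j - 1) + b • u j
  have hq : q ∈ brokenLine ℝ u m :=
    mem_biUnion hj (by rw [segment_eq_image]; exact ⟨b, ⟨hb0, hb1⟩, rfl⟩)
  rw [Finset.mem_Icc] at hj
  have hdiff : (1 - b) • v (j - 1) + b • v j - q =
      (1 - b) • (v (j - 1) - u (j - 1)) + b • (v j - u j) := by
    simp only [q]
    module
  have hzero : (1 - b) • v (j - 1) + b • v j - q = 0 := by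
    refine eq_zero_of_mem_sector_of_neg_I_mul_mem_sector ht0.le ht1 ?_ ?_
    · simpa only [neg_sub] using PointedCone.sub_mem_or_of_mem_brokenLine hu hq hpu
    · rw [hdiff, mul_add, mul_smul_comm, mul_smul_comm]
      exact (sector t).add_mem ((sector t).smul_mem (sub_nonneg.2 hb1) (hgap _ (by omega)))
        ((sector t).smul_mem hb0 (hgap _ hj.2))
  have him := congrArg im (hdiff.symm.trans hzero)
  simp only [add_im, smul_im, smul_eq_mul, zero_im] at him
  have hgap_nonneg : 0 ≤ (v (j - 1) - u (j - 1)).im := by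
    simpa using re_nonneg_of_mem_sector ht0 (hgap (j - 1) (by omega))
  obtain ⟨hprev, hlast⟩ := (add_eq_zero_iff_of_nonneg (mul_nonneg (sub_nonneg.2 hb1) hgap_nonneg)
    (mul_nonneg hb0 (hgap_pos j hj.1 hj.2).le)).1 him
  have hb : b = 0 := (mul_eq_zero.1 hlast).resolve_right (hgap_pos j hj.1 hj.2).ne'
  have hj1 : j = 1 := by
    by_contra hj1
    rw [hb, sub_zero, one_mul] at hprev
    exact (hgap_pos (j - 1) (by omega) (by omega)).ne' hprev
  simp [hb, hj1]

theorem brokenLine_inter_eq_singleton (ht0 : 0 < t) (ht1 : t < 1) {m : ℕ} (hm : 1 ≤ m)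
    {u v : ℕ → ℂ} (h0 : u 0 = v 0) (hu : ∀ k, 1 ≤ k → k ≤ m → u k - u (k - 1) ∈ sector t)
    (hvu : ∀ k, 1 ≤ k → k ≤ m → -I * ((v k - v (k - 1)) - (u k - u (k - 1))) ∈ sector t)
    (h1 : v 1 - v 0 ≠ u 1 - u 0) :
    brokenLine ℝ u m ∩ brokenLine ℝ v m = {u 0} := by
  set w : ℕ → ℂ := fun n => -I * (v n - u n)
  have hw0 : w 0 = 0 := by simp [w, h0]
  have hw_inc : ∀ k, 1 ≤ k → k ≤ m → w k - w (k - 1) ∈ sector t := fun k hk hkm => by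
    convert hvu k hk hkm using 1
    ring
  have hgap : ∀ n ≤ m, w n ∈ sector t := fun n hn => by
    simpa [hw0] using PointedCone.sub_mem_of_increments_mem
      (fun k hk hkn => hw_inc k hk (hkn.trans hn)) n.zero_le
  have hgap_pos : ∀ n, 1 ≤ n → n ≤ m → 0 < (v n - u n).im := fun n hn hnm => by
    simpa [w] using re_pos_of_increments_mem_sector ht0 hw_inc hw0
      (mul_ne_zero (neg_ne_zero.2 I_ne_zero) (sub_ne_zero.2 fun h => h1 (by rw [h, h0]))) hn hnm
  have h1m : 1 ∈ Finset.Icc 1 m := Finset.mem_Icc.2 ⟨le_rfl, hm⟩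
  refine eq_singleton_iff_unique_mem.2 ⟨⟨?_, ?_⟩, fun p hp => ?_⟩
  · exact mem_biUnion h1m (left_mem_segment ℝ _ _)
  · exact h0 ▸ mem_biUnion h1m (left_mem_segment ℝ _ _)
  · exact h0 ▸ eq_of_mem_brokenLine_inter ht0 ht1 hu hgap hgap_pos hp.1 hp.2

end Sector

theorem tan_pi_div_ten_lt_one : Real.tan (π / 10) < 1 := by
  rw [← Real.tan_pi_div_four]
  exact Real.tan_lt_tan_of_nonneg_of_lt_pi_div_two (by positivity) (by linarith [pi_pos])
    (by linarith [pi_pos])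

theorem arm_lemma_disjoint_of_strict_first_turn_general (m : ℕ) (hm : 1 ≤ m) (u v : ℕ → ℂ)
    (h0 : u 0 = v 0)
    (hlen : ∀ j, 1 ≤ j → j ≤ m → ‖u j - u (j - 1)‖ = ‖v j - v (j - 1)‖)
    (huarg : ∀ j, 1 ≤ j → j ≤ m →
      Complex.arg (u j - u (j - 1)) ∈ Set.Ioo (-(π / 10)) (π / 10))
    (hvarg : ∀ j, 1 ≤ j → j ≤ m →
      Complex.arg (v j - v (j - 1)) ∈ Set.Ioo (-(π / 10)) (π / 10))
    (hmono : ∀ j, 1 ≤ j → j ≤ m →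
      Complex.arg (u j - u (j - 1)) ≤ Complex.arg (v j - v (j - 1)))
    (hstrict : Complex.arg (u 1 - u 0) < Complex.arg (v 1 - v 0)) :
    (⋃ i ∈ Finset.Icc 1 m, segment ℝ (u (i - 1)) (u i)) ∩
      (⋃ j ∈ Finset.Icc 1 m, segment ℝ (v (j - 1)) (v j)) = {u 0} := by
  have hθ : π / 10 < π / 2 := by linarith [pi_pos]
  have habs {z : ℂ} (hz : arg z ∈ Ioo (-(π / 10)) (π / 10)) : |arg z| ≤ π / 10 :=
    abs_le.2 ⟨hz.1.le, hz.2.le⟩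
  refine brokenLine_inter_eq_singleton
    (Real.tan_pos_of_pos_of_lt_pi_div_two (by positivity) hθ) tan_pi_div_ten_lt_one hm h0
    (fun k hk hkm => mem_sector_of_abs_arg_le (habs (huarg k hk hkm)) hθ)
    (fun k hk hkm => neg_I_mul_sub_mem_sector (hlen k hk hkm) (habs (huarg k hk hkm))
      (habs (hvarg k hk hkm)) (hmono k hk hkm) hθ) ?_
  intro h
  rw [h] at hstrict
  exact hstrict.false

/-- **Arm Lemma (disjointness under strict first turn).** -/
theorem arm_lemma_disjoint_of_strict_first_turn (m : ℕ) (hm : 1 ≤ m) (u v : ℕ → ℂ)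
    (h0 : u 0 = v 0)
    (hlen : ∀ j, 1 ≤ j → j ≤ m → ‖u j - u (j - 1)‖ = ‖v j - v (j - 1)‖)
    (hune : ∀ j, 1 ≤ j → j ≤ m → u j - u (j - 1) ≠ 0)
    (hvne : ∀ j, 1 ≤ j → j ≤ m → v j - v (j - 1) ≠ 0)
    (huarg : ∀ j, 1 ≤ j → j ≤ m →
      Complex.arg (u j - u (j - 1)) ∈ Set.Ioo (-(π / 10)) (π / 10))
    (hvarg : ∀ j, 1 ≤ j → j ≤ m →
      Complex.arg (v j - v (j - 1)) ∈ Set.Ioo (-(π / 10)) (π / 10))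
    (hmono : ∀ j, 1 ≤ j → j ≤ m →
      Complex.arg (u j - u (j - 1)) ≤ Complex.arg (v j - v (j - 1)))
    (hstrict : Complex.arg (u 1 - u 0) < Complex.arg (v 1 - v 0)) :
    (⋃ i ∈ Finset.Icc 1 m, segment ℝ (u (i - 1)) (u i)) ∩
      (⋃ j ∈ Finset.Icc 1 m, segment ℝ (v (j - 1)) (v j)) = {u 0} :=
  arm_lemma_disjoint_of_strict_first_turn_general m hm u v h0 hlen huarg hvarg hmono hstrict
end

section
/- Arm Lemma, base case m = 1. Let o, u, v ∈ ℝ² (identified with ℂ) satisfy |u − o| = |v − o| ≠ 0, with arg(u − o) and arg(v − o) both in the open interval (−π/10, π/10) and arg(v − o) > arg(u − o). Then v − u is nonzero and arg(v − u) ∈ (π/2 − π/10, π/2 + π/10). -/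
open Complex Real Set

/-!
A chord of a circle is perpendicular to the bisector of the angle it subtends at the centre:
`r (e^{iβ} - e^{iα}) = 2 r sin ((β - α) / 2) · e^{i ((α + β) / 2 + π / 2)}`, and the real factor is
positive when `0 < β - α < 2π`. Hence `arg (v - u) = (α + β) / 2 + π / 2`, which lies within `π / 10`
of `π / 2` when `α` and `β` do within `π / 10` of `0`.
-/

namespace Complex

theorem exp_mul_I_sub_exp_mul_I_s3 (a b : ℂ) :
    exp (b * I) - exp (a * I) = 2 * sin ((b - a) / 2) * exp (((a + b) / 2 + π / 2) * I) := by
  have hb : exp (b * I) = exp ((a + b) / 2 * I) * exp ((b - a) / 2 * I) := by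
    rw [← exp_add]; ring_nf
  have ha : exp (a * I) = exp ((a + b) / 2 * I) * exp (-((b - a) / 2) * I) := by
    rw [← exp_add]; ring_nf
  rw [hb, ha, two_sin, add_mul, exp_add, exp_pi_div_two_mul_I]
  linear_combination
    exp ((a + b) / 2 * I) * (exp ((b - a) / 2 * I) - exp (-((b - a) / 2) * I)) * I_sq

theorem arg_exp_mul_I_sub_exp_mul_I {α β : ℝ} (hαβ : α < β) (hβα : β - α < 2 * π)
    (hmid : (α + β) / 2 + π / 2 ∈ Ioc (-π) π) :
    arg (exp (β * I) - exp (α * I)) = (α + β) / 2 + π / 2 := by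
  have hsin : 0 < 2 * Real.sin ((β - α) / 2) := by
    have := Real.sin_pos_of_pos_of_lt_pi (x := (β - α) / 2) (by linarith) (by linarith)
    linarith
  have hdiff : exp (β * I) - exp (α * I) =
      ↑(2 * Real.sin ((β - α) / 2)) * exp (↑((α + β) / 2 + π / 2) * I) := by
    rw [exp_mul_I_sub_exp_mul_I_s3]
    push_cast
    rfl
  rw [hdiff, arg_real_mul _ hsin, arg_exp_mul_I, toIocMod_eq_self]
  exact ⟨hmid.1, by linarith [hmid.2]⟩

theorem arg_sub_of_norm_eq {z w : ℂ} (hnorm : ‖z‖ = ‖w‖) (hlt : arg z < arg w)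
    (hsum : arg z + arg w ≤ π) :
    arg (w - z) = (arg z + arg w) / 2 + π / 2 := by
  have hz : z ≠ 0 := by
    rintro rfl
    rw [norm_zero, eq_comm, norm_eq_zero] at hnorm
    simp [hnorm] at hlt
  have hdiff : w - z = ↑‖z‖ * (exp (arg w * I) - exp (arg z * I)) := by
    rw [mul_sub, norm_mul_exp_arg_mul_I, hnorm, norm_mul_exp_arg_mul_I]
  rw [hdiff, arg_real_mul _ (norm_pos_iff.mpr hz)]
  exact arg_exp_mul_I_sub_exp_mul_I hlt (by linarith [neg_pi_lt_arg z, arg_le_pi w])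
    ⟨by linarith [neg_pi_lt_arg z, neg_pi_lt_arg w], by linarith⟩

end Complex

theorem arm_lemma_base_case_general (o u v : ℂ)
    (hlen : ‖u - o‖ = ‖v - o‖)
    (huarg : Complex.arg (u - o) ∈ Set.Ioo (-(π / 10)) (π / 10))
    (hvarg : Complex.arg (v - o) ∈ Set.Ioo (-(π / 10)) (π / 10))
    (hlt : Complex.arg (u - o) < Complex.arg (v - o)) :
    v - u ≠ 0 ∧ Complex.arg (v - u) ∈ Set.Ioo (π / 2 - π / 10) (π / 2 + π / 10) := by
  obtain ⟨hu₁, hu₂⟩ := huarg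
  obtain ⟨hv₁, hv₂⟩ := hvarg
  refine ⟨sub_ne_zero.mpr fun h => hlt.ne (by rw [h]), ?_⟩
  rw [← sub_sub_sub_cancel_right v u o, Complex.arg_sub_of_norm_eq hlen hlt (by linarith)]
  constructor <;> linarith

/-- **Arm Lemma, base case m = 1.** -/
theorem arm_lemma_base_case (o u v : ℂ)
    (hne : u - o ≠ 0)
    (hlen : ‖u - o‖ = ‖v - o‖)
    (huarg : Complex.arg (u - o) ∈ Set.Ioo (-(π / 10)) (π / 10))
    (hvarg : Complex.arg (v - o) ∈ Set.Ioo (-(π / 10)) (π / 10))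
    (hlt : Complex.arg (u - o) < Complex.arg (v - o)) :
    v - u ≠ 0 ∧ Complex.arg (v - u) ∈ Set.Ioo (π / 2 - π / 10) (π / 2 + π / 10) :=
  arm_lemma_base_case_general o u v hlen huarg hvarg hlt
end

section
/- Reduction of the argument condition to an angle-sum condition. Let u_0, u_1, ..., u_m and v_0, v_1, ..., v_m be points of ℝ² (identified with ℂ) such that for each j = 1, ..., m the differences u_j − u_{j−1} and v_j − v_{j−1} are nonzero with arguments in the open interval (−π/10, π/10). Assume arg(v_1 − v_0) ≥ arg(u_1 − u_0), and that for each i = 1, ..., m−1 the counterclockwise angles satisfy ∠ v_{i+1} v_i v_{i−1} + ∠ u_{i−1} u_i u_{i+1} ≤ 2π. Then arg(v_i − v_{i−1}) ≥ arg(u_i − u_{i−1}) holds for every i = 1, ..., m. -/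
open Complex Real Set

/-- The counterclockwise angle `∠ y x z` at `x` from the ray `x y` to the ray `x z`:
the unique representative in `[0, 2π)` of `arg ((z - x) / (y - x))` modulo `2π`. -/
noncomputable def ccwAngle (x y z : ℂ) : ℝ :=
  if Complex.arg ((z - x) / (y - x)) < 0 then
    Complex.arg ((z - x) / (y - x)) + 2 * Real.pi
  else
    Complex.arg ((z - x) / (y - x))

lemma ccw_key {p q : ℂ} (hp : p ≠ 0) (hq : q ≠ 0)
    (hpa : Complex.arg p ∈ Set.Ioo (-(π / 10)) (π / 10))
    (hqa : Complex.arg q ∈ Set.Ioo (-(π / 10)) (π / 10)) :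
    (if Complex.arg (-(p / q)) < 0 then Complex.arg (-(p / q)) + 2 * π
      else Complex.arg (-(p / q))) = Complex.arg p - Complex.arg q + π := by
  have hpq : p / q ≠ 0 := div_ne_zero hp hq
  set δ : ℝ := Complex.arg p - Complex.arg q + π with hδ
  have hangle : (Complex.arg (-(p / q)) : Real.Angle) = (δ : ℝ) := by
    rw [Complex.arg_neg_coe_angle hpq, Complex.arg_div_coe_angle hp hq, hδ]
    push_cast [Real.Angle.coe_add, Real.Angle.coe_sub]
    ring_nf
  have hπ : (0:ℝ) < π := Real.pi_pos
  have hδlb : 4 * π / 5 < δ := by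
    have := hpa.1; have := hqa.2; simp only [hδ]; linarith
  have hδub : δ < 6 * π / 5 := by
    have := hpa.2; have := hqa.1; simp only [hδ]; linarith
  rcases le_or_gt δ π with h | h
  · have : Complex.arg (-(p / q)) = δ := by
      rw [← Complex.arg_coe_angle_toReal_eq_arg, hangle,
        Real.Angle.toReal_coe_eq_self_iff_mem_Ioc]
      constructor <;> [linarith; exact h]
    rw [this, if_neg (by linarith)]
  · have hcoe : ((δ - 2 * π : ℝ) : Real.Angle) = (δ : ℝ) := by
      rw [Real.Angle.angle_eq_iff_two_pi_dvd_sub]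
      exact ⟨-1, by push_cast; ring⟩
    have : Complex.arg (-(p / q)) = δ - 2 * π := by
      rw [← Complex.arg_coe_angle_toReal_eq_arg, hangle, ← hcoe,
        Real.Angle.toReal_coe_eq_self_iff_mem_Ioc]
      constructor <;> linarith
    rw [this, if_pos (by linarith)]
    ring

/-- **Reduction of the argument condition to an angle-sum condition.** -/
theorem arg_mono_of_angle_sum (m : ℕ) (u v : ℕ → ℂ)
    (hune : ∀ j, 1 ≤ j → j ≤ m → u j - u (j - 1) ≠ 0)
    (hvne : ∀ j, 1 ≤ j → j ≤ m → v j - v (j - 1) ≠ 0)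
    (huarg : ∀ j, 1 ≤ j → j ≤ m →
      Complex.arg (u j - u (j - 1)) ∈ Set.Ioo (-(π / 10)) (π / 10))
    (hvarg : ∀ j, 1 ≤ j → j ≤ m →
      Complex.arg (v j - v (j - 1)) ∈ Set.Ioo (-(π / 10)) (π / 10))
    (hfirst : Complex.arg (u 1 - u 0) ≤ Complex.arg (v 1 - v 0))
    (hangle : ∀ i, 1 ≤ i → i ≤ m - 1 →
      ccwAngle (v i) (v (i + 1)) (v (i - 1)) + ccwAngle (u i) (u (i - 1)) (u (i + 1)) ≤ 2 * π) :
    ∀ i, 1 ≤ i → i ≤ m → Complex.arg (u i - u (i - 1)) ≤ Complex.arg (v i - v (i - 1)) := by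
  intro i hi1
  induction i, hi1 using Nat.le_induction with
  | base => intro _; simpa using hfirst
  | succ n hn ih =>
    intro hnm
    have hnle : n ≤ m := Nat.le_of_succ_le hnm
    have hIH := ih hnle
    have hang := hangle n hn (by omega)
    have hvn := hvne n hn hnle
    have hvn1 := hvne (n + 1) (by omega) hnm
    have hun := hune n hn hnle
    have hun1 := hune (n + 1) (by omega) hnm
    have hvan := hvarg n hn hnle
    have hvan1 := hvarg (n + 1) (by omega) hnm
    have huan := huarg n hn hnle
    have huan1 := huarg (n + 1) (by omega) hnm
    simp only [Nat.add_sub_cancel] at hvn1 hun1 hvan1 huan1 ⊢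
    have hv : ccwAngle (v n) (v (n + 1)) (v (n - 1)) =
        Complex.arg (v n - v (n - 1)) - Complex.arg (v (n + 1) - v n) + π := by
      have e1 : (v (n - 1) - v n) / (v (n + 1) - v n)
          = -((v n - v (n - 1)) / (v (n + 1) - v n)) := by
        rw [← neg_sub, neg_div]
      unfold ccwAngle
      rw [e1]
      exact ccw_key hvn hvn1 hvan hvan1
    have hu : ccwAngle (u n) (u (n - 1)) (u (n + 1)) =
        Complex.arg (u (n + 1) - u n) - Complex.arg (u n - u (n - 1)) + π := by
      have e2 : (u (n + 1) - u n) / (u (n - 1) - u n)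
          = -((u (n + 1) - u n) / (u n - u (n - 1))) := by
        rw [show u (n - 1) - u n = -(u n - u (n - 1)) by ring, div_neg]
      unfold ccwAngle
      rw [e2]
      exact ccw_key hun1 hun huan1 huan
    rw [hv, hu] at hang
    linarith
end
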